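/- Over the alphabet {0, 1, 2}, the iterated shuffle of the set {01, 2} satisfies {01, 2}^† = { w ∈ {0,1,2}* : |w|_0 = |w|_1 and every prefix u of w satisfies |u|_0 ≥ |u|_1 }. -/

import Mathlib

/-- `Shuffle u v w` means that the word `w` is an interleaving (shuffle) of the
words `u` and `v`. -/
inductive Shuffle {α : Type*} : List α → List α → List α → Prop
  | nil : Shuffle [] [] []
  | left {a : α} {u v w : List α} : Shuffle u v w → Shuffle (a :: u) v (a :: w)
  | right {a : α} {u v w : List α} : Shuffle u v w → Shuffle u (a :: v) (a :: w)

/-- `IterShuffle S y` means `y` belongs to the iterated shuffle `S^†`, i.e. `y`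
can be obtained by shuffling together finitely many (possibly zero) words of `S`. -/
inductive IterShuffle {α : Type*} (S : Set (List α)) : List α → Prop
  | nil : IterShuffle S []
  | step {u w y : List α} : u ∈ S → IterShuffle S w → Shuffle u w y → IterShuffle S y

/-!
Read `a` as an opening and `b` as a closing bracket, all other letters being neutral. Dyck words
are closed under shuffle, since a prefix of a shuffle is a shuffle of prefixes, and `01`, `2` are
Dyck words; this gives one inclusion. Conversely, a nonempty Dyck word starts with `a` or a neutral
letter. A neutral first letter is shuffled in front of the rest. A first `a` is matched with the
first `b` at which the remaining word dips below zero, and deleting this pair leaves a shorter Dyck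
word.
-/

namespace List

variable {α : Type*}

theorem forall_prefix_cons_iff {P : List α → Prop} {x : α} {t : List α} :
    (∀ u, u <+: x :: t → P u) ↔ P [] ∧ ∀ u, u <+: t → P (x :: u) := by
  simp only [prefix_cons_iff, or_imp, forall_and, forall_eq, exists_imp, and_imp]
  constructor
  · rintro ⟨hnil, hcons⟩
    exact ⟨hnil, fun u hu => hcons _ u rfl hu⟩
  · rintro ⟨hnil, hcons⟩
    exact ⟨hnil, fun _ u hu hp => hu ▸ hcons u hp⟩

theorem forall_prefix_append_iff {P : List α → Prop} :
    ∀ {A B : List α}, (∀ u, u <+: A ++ B → P u) ↔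
      (∀ u, u <+: A → P u) ∧ ∀ v, v <+: B → P (A ++ v)
  | [], B => by simp +contextual [prefix_nil]
  | x :: A, B => by
    rw [cons_append, forall_prefix_cons_iff, forall_prefix_cons_iff, forall_prefix_append_iff]
    simp only [cons_append, and_assoc]

end List

namespace Shuffle

variable {α : Type*}

theorem nil_left : ∀ v : List α, Shuffle [] v v
  | [] => .nil
  | _ :: v => .right (nil_left v)

theorem singleton_append_cons (x : α) : ∀ A B : List α, Shuffle [x] (A ++ B) (A ++ x :: B)
  | [], B => .left (nil_left B)
  | _ :: A, B => .right (singleton_append_cons x A B)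

theorem count_eq_add [DecidableEq α] {u v w : List α} (h : Shuffle u v w) (a : α) :
    w.count a = u.count a + v.count a := by
  induction h with
  | nil => rfl
  | left _ ih => simp only [List.count_cons, ih]; ring
  | right _ ih => simp only [List.count_cons, ih]; ring

theorem exists_shuffle_of_prefix {u v w p : List α} (h : Shuffle u v w) (hp : p <+: w) :
    ∃ pu pv, pu <+: u ∧ pv <+: v ∧ Shuffle pu pv p := by
  induction h generalizing p with
  | nil => exact ⟨[], [], List.nil_prefix, List.nil_prefix, List.prefix_nil.mp hp ▸ .nil⟩
  | left _ ih =>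
    obtain rfl | ⟨q, rfl, hq⟩ := List.prefix_cons_iff.mp hp
    · exact ⟨[], [], List.nil_prefix, List.nil_prefix, .nil⟩
    · obtain ⟨pu, pv, hpu, hpv, hs⟩ := ih hq
      exact ⟨_, pv, List.cons_prefix_cons.mpr ⟨rfl, hpu⟩, hpv, hs.left⟩
  | right _ ih =>
    obtain rfl | ⟨q, rfl, hq⟩ := List.prefix_cons_iff.mp hp
    · exact ⟨[], [], List.nil_prefix, List.nil_prefix, .nil⟩
    · obtain ⟨pu, pv, hpu, hpv, hs⟩ := ih hq
      exact ⟨pu, _, hpu, List.cons_prefix_cons.mpr ⟨rfl, hpv⟩, hs.right⟩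

end Shuffle

section Dyck

variable {α : Type*} [DecidableEq α] {a b c : α}

def IsDyckWord (a b : α) (w : List α) : Prop :=
  w.count a = w.count b ∧ ∀ u, u <+: w → u.count b ≤ u.count a

theorem isDyckWord_pair : IsDyckWord a b [a, b] := by
  by_cases hab : a = b
  · subst hab
    simp [IsDyckWord]
  · simp [IsDyckWord, List.forall_prefix_cons_iff, hab, Ne.symm hab]

theorem isDyckWord_singleton (hca : c ≠ a) (hcb : c ≠ b) : IsDyckWord a b [c] := by
  simp [IsDyckWord, List.forall_prefix_cons_iff, hca, hcb]

theorem Shuffle.isDyckWord {u v w : List α} (h : Shuffle u v w) (hu : IsDyckWord a b u)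
    (hv : IsDyckWord a b v) : IsDyckWord a b w := by
  refine ⟨by rw [h.count_eq_add, h.count_eq_add, hu.1, hv.1], fun p hp => ?_⟩
  obtain ⟨pu, pv, hpu, hpv, hs⟩ := h.exists_shuffle_of_prefix hp
  rw [hs.count_eq_add, hs.count_eq_add]
  exact Nat.add_le_add (hu.2 pu hpu) (hv.2 pv hpv)

theorem IterShuffle.isDyckWord {S : Set (List α)} (hS : ∀ u ∈ S, IsDyckWord a b u)
    {w : List α} (h : IterShuffle S w) : IsDyckWord a b w := by
  induction h with
  | nil => exact ⟨rfl, fun u hu => by simp [List.prefix_nil.mp hu]⟩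
  | step hu _ hs ih => exact hs.isDyckWord (hS _ hu) ih

theorem List.exists_eq_append_cons_of_count_lt :
    ∀ {t : List α}, t.count a < t.count b →
      ∃ A B, t = A ++ b :: B ∧ ∀ u, u <+: A → u.count b ≤ u.count a
  | [], h => by simp at h
  | x :: s, h => by
    by_cases hxb : x = b
    · exact ⟨[], s, by rw [hxb, nil_append], by simp⟩
    have hs : s.count a < s.count b := by
      have := s.count_le_count_cons (a := a) (b := x)
      rw [count_cons_of_ne hxb] at h
      omega
    obtain ⟨A, B, rfl, hA⟩ := exists_eq_append_cons_of_count_lt hs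
    refine ⟨x :: A, B, rfl, forall_prefix_cons_iff.mpr ⟨by simp, fun u hu => ?_⟩⟩
    rw [count_cons_of_ne hxb]
    exact (hA u hu).trans (u.count_le_count_cons (a := a) (b := x))

theorem IsDyckWord.of_cons_append_cons (hab : a ≠ b) {A B : List α}
    (hA : ∀ u, u <+: A → u.count b ≤ u.count a)
    (h : IsDyckWord a b (a :: (A ++ b :: B))) : IsDyckWord a b (A ++ B) := by
  obtain ⟨hcount, hpre⟩ := h
  refine ⟨?_, List.forall_prefix_append_iff.mpr ⟨hA, fun v hv => ?_⟩⟩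
  · simp [hab, Ne.symm hab] at hcount ⊢
    omega
  · have := hpre (a :: (A ++ b :: v)) (by simpa using hv)
    simp [hab, Ne.symm hab] at this ⊢
    omega

theorem IsDyckWord.of_cons (hca : c ≠ a) (hcb : c ≠ b) {t : List α}
    (h : IsDyckWord a b (c :: t)) : IsDyckWord a b t := by
  obtain ⟨hcount, hpre⟩ := h
  refine ⟨by simpa [List.count_cons_of_ne hca, List.count_cons_of_ne hcb] using hcount,
    fun u hu => ?_⟩
  simpa [List.count_cons_of_ne hca, List.count_cons_of_ne hcb] using hpre (c :: u) (by simpa)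

theorem not_isDyckWord_cons_right (hab : a ≠ b) {t : List α} : ¬IsDyckWord a b (b :: t) :=
  fun h => by simpa [Ne.symm hab] using h.2 [b] (by simp)

theorem IsDyckWord.iterShuffle {S : Set (List α)} (hab : a ≠ b) (hpair : [a, b] ∈ S)
    (hsingle : ∀ c, c ≠ a → c ≠ b → [c] ∈ S) :
    ∀ {w : List α}, IsDyckWord a b w → IterShuffle S w
  | [], _ => .nil
  | x :: t, h => by
    by_cases hxa : x = a
    · subst x
      have ht : t.count a < t.count b := by
        have := h.1
        rw [List.count_cons_self, List.count_cons_of_ne hab] at this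
        omega
      obtain ⟨A, B, rfl, hA⟩ := List.exists_eq_append_cons_of_count_lt ht
      exact .step hpair (IsDyckWord.iterShuffle hab hpair hsingle (h.of_cons_append_cons hab hA))
        (Shuffle.singleton_append_cons b A B).left
    by_cases hxb : x = b
    · exact absurd (hxb ▸ h) (not_isDyckWord_cons_right hab)
    · exact .step (hsingle x hxa hxb)
        (IsDyckWord.iterShuffle hab hpair hsingle (h.of_cons hxa hxb)) (Shuffle.nil_left t).left
termination_by w => w.length

end Dyck

/-- Over the alphabet `{0, 1, 2}`, the iterated shuffle of `{01, 2}` is exactly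
the set of words `w` with `|w|₀ = |w|₁` in which every prefix `u` satisfies
`|u|₀ ≥ |u|₁`. -/
theorem iterShuffle_dyck_example :
    ∀ w : List (Fin 3),
      IterShuffle ({[0, 1], [2]} : Set (List (Fin 3))) w ↔
        (w.count 0 = w.count 1 ∧ ∀ u : List (Fin 3), u <+: w → u.count 1 ≤ u.count 0) := by
  set S : Set (List (Fin 3)) := {[0, 1], [2]}
  have hdyck : ∀ u ∈ S, IsDyckWord 0 1 u := by
    rintro u (rfl | rfl)
    exacts [isDyckWord_pair, isDyckWord_singleton (by decide) (by decide)]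
  have hsingle : ∀ c : Fin 3, c ≠ 0 → c ≠ 1 → [c] ∈ S := by decide
  exact fun w => ⟨IterShuffle.isDyckWord hdyck,
    IsDyckWord.iterShuffle (by decide) (Set.mem_insert _ _) hsingle⟩
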